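/- Let G be a finite solvable group, N a normal subgroup of G with G/N nontrivial. Write bars for images in G/N. Then the following are equivalent: (i) the image of S(G) in G/N is nontrivial; (ii) the Fitting height of G/N equals the Fitting height of G; (iii) S(G/N) equals the image of S(G) in G/N. -/

import Mathlib

/-!
Normal subgroups `K` with `h(G/K) < h(G)` are closed under intersection, because `G/(K ∩ L)`
embeds into `G/K × G/L` and Fitting height does not grow under subgroups and direct products.
For finite `G` their intersection `S(G)` is therefore the least of them:
`S(G) ≤ K ↔ h(G/K) < h(G)`. Pulling a normal subgroup of `G/N` back to `G` does not change the
quotient, so when `h(G/N) = h(G)` the subgroups `S(G/N)` and `S(G)N/N` lie below the same normal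
subgroups of `G/N`, hence coincide.
-/

/-- `FittingHeightLe n G` says the group `G` has a normal series of length at most `n`
with nilpotent quotients, i.e. Fitting height at most `n`. -/
def FittingHeightLe : ℕ → ∀ (G : Type) [Group G], Prop
  | 0, G, _ => Subsingleton G
  | (n+1), G, _ => ∃ (N : Subgroup G) (hN : N.Normal), Group.IsNilpotent N ∧
      (letI := hN; FittingHeightLe n (G ⧸ N))

/-- The Fitting height of a group (junk value if no bound exists). -/
noncomputable def fittingHeight (G : Type) [Group G] : ℕ :=
  sInf {n | FittingHeightLe n G}

/-- `SG G` is the intersection of all normal subgroups of `G` whose quotient has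
Fitting height strictly smaller than that of `G`. -/
noncomputable def SG (G : Type) [Group G] : Subgroup G :=
  sInf {K : Subgroup G | ∃ hK : K.Normal,
    (letI := hK; fittingHeight (G ⧸ K)) < fittingHeight G}

/-- The Fitting subgroup: the join of all nilpotent normal subgroups. -/
def FittingSub (G : Type) [Group G] : Subgroup G :=
  ⨆ (N : Subgroup G) (_ : N.Normal) (_ : Group.IsNilpotent N), N

open QuotientGroup

namespace FittingHeightLe

theorem of_surjective {n : ℕ} {G H : Type} [Group G] [Group H] (f : G →* H)
    (hf : Function.Surjective f) (h : FittingHeightLe n G) : FittingHeightLe n H := by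
  induction n generalizing G H with
  | zero =>
    have : Subsingleton G := h
    exact hf.subsingleton
  | succ n ih =>
    obtain ⟨M, hM, hnil, hq⟩ := h
    have : (M.map f).Normal := hM.map f hf
    refine ⟨M.map f, this, Group.nilpotent_of_surjective _ (f.subgroupMap_surjective M), ?_⟩
    exact ih (map M (M.map f) f (Subgroup.le_comap_map f M))
      (map_surjective_of_surjective _ _ _ (mk_surjective.comp hf) _) hq

theorem of_injective {n : ℕ} {G H : Type} [Group G] [Group H] (f : G →* H)
    (hf : Function.Injective f) (h : FittingHeightLe n H) : FittingHeightLe n G := by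
  induction n generalizing G H with
  | zero =>
    have : Subsingleton H := h
    exact hf.subsingleton
  | succ n ih =>
    obtain ⟨M, hM, hnil, hq⟩ := h
    have hinj : Function.Injective (f.subgroupComap M) := fun a b hab =>
      Subtype.ext (hf (congrArg Subtype.val hab))
    refine ⟨M.comap f, hM.comap f, ?_, ?_⟩
    · exact Subgroup.isNilpotent_of_ker_le_center _
        (((MonoidHom.ker_eq_bot_iff _).mpr hinj).trans_le bot_le)
    · exact ih (map (M.comap f) M f le_rfl)
        ((injective_lift_iff _ _ _).mpr (by rw [← MonoidHom.comap_ker, ker_mk'])) hq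

theorem congr {n : ℕ} {G H : Type} [Group G] [Group H] (e : G ≃* H) (h : FittingHeightLe n G) :
    FittingHeightLe n H :=
  h.of_surjective e.toMonoidHom e.surjective

theorem succ {n : ℕ} {G : Type} [Group G] (h : FittingHeightLe n G) :
    FittingHeightLe (n + 1) G :=
  ⟨⊥, inferInstance, inferInstance, h.congr (quotientBot (G := G)).symm⟩

theorem mono {m n : ℕ} {G : Type} [Group G] (hmn : m ≤ n) (h : FittingHeightLe m G) :
    FittingHeightLe n G := by
  induction n, hmn using Nat.le_induction with
  | base => exact h
  | succ n _ ih => exact ih.succ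

theorem prod {n : ℕ} {G H : Type} [Group G] [Group H] (hG : FittingHeightLe n G)
    (hH : FittingHeightLe n H) : FittingHeightLe n (G × H) := by
  induction n generalizing G H with
  | zero =>
    have : Subsingleton G := hG
    have : Subsingleton H := hH
    exact (inferInstance : Subsingleton (G × H))
  | succ n ih =>
    obtain ⟨M, hM, hnilM, hqM⟩ := hG
    obtain ⟨K, hK, hnilK, hqK⟩ := hH
    refine ⟨M.prod K, inferInstance, Group.nilpotent_of_mulEquiv (M.prodEquiv K).symm, ?_⟩
    exact (ih hqM hqK).congr (prodMulEquiv M K).symm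

open scoped IsMulCommutative in
theorem of_derivedSeries_eq_bot {n : ℕ} {G : Type} [Group G] (h : derivedSeries G n = ⊥) :
    FittingHeightLe n G := by
  induction n generalizing G with
  | zero => exact Subgroup.subsingleton_iff.mp (subsingleton_of_top_eq_bot h)
  | succ n ih =>
    have : IsMulCommutative (derivedSeries G n) := by
      rwa [← Subgroup.commutator_self_eq_bot_iff, ← derivedSeries_succ]
    refine ⟨derivedSeries G n, inferInstance, inferInstance, ih ?_⟩
    rw [← map_derivedSeries_eq (mk'_surjective _), Subgroup.map_eq_bot_iff, ker_mk']

end FittingHeightLe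

section FittingHeight

variable {G H : Type} [Group G] [Group H]

theorem fittingHeight_le {n : ℕ} (h : FittingHeightLe n G) : fittingHeight G ≤ n :=
  Nat.sInf_le h

theorem fittingHeight_eq_zero [Subsingleton G] : fittingHeight G = 0 :=
  Nat.le_zero.mp (fittingHeight_le (n := 0) ‹_›)

theorem fittingHeightLe_fittingHeight [Group.IsSolvable G] :
    FittingHeightLe (fittingHeight G) G :=
  let ⟨n, hn⟩ := Group.IsSolvable.solvable (G := G)
  Nat.sInf_mem (s := {n | FittingHeightLe n G}) ⟨n, .of_derivedSeries_eq_bot hn⟩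

theorem fittingHeight_congr (e : G ≃* H) : fittingHeight G = fittingHeight H :=
  congrArg sInf (Set.ext fun _ => ⟨(·.congr e), (·.congr e.symm)⟩)

theorem fittingHeight_le_of_surjective [Group.IsSolvable G] (f : G →* H)
    (hf : Function.Surjective f) : fittingHeight H ≤ fittingHeight G :=
  fittingHeight_le (fittingHeightLe_fittingHeight.of_surjective f hf)

theorem fittingHeight_quotient_le [Group.IsSolvable G] (N : Subgroup G) [N.Normal] :
    fittingHeight (G ⧸ N) ≤ fittingHeight G :=
  fittingHeight_le_of_surjective (mk' N) (mk'_surjective N)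

theorem fittingHeight_pos [Group.IsSolvable G] [Nontrivial G] : 0 < fittingHeight G := by
  refine Nat.pos_of_ne_zero fun h => not_subsingleton G ?_
  have h0 : FittingHeightLe (fittingHeight G) G := fittingHeightLe_fittingHeight
  rwa [h] at h0

theorem fittingHeight_quotient_comap (f : G →* H) (hf : Function.Surjective f)
    (K : Subgroup H) [K.Normal] : fittingHeight (G ⧸ K.comap f) = fittingHeight (H ⧸ K) := by
  have hker : ((mk' K).comp f).ker = K.comap f := by rw [← MonoidHom.comap_ker, ker_mk']
  exact fittingHeight_congr ((quotientMulEquivOfEq hker.symm).trans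
    (quotientKerEquivOfSurjective _ (mk'_surjective K |>.comp hf)))

theorem fittingHeight_quotient_inf_le [Group.IsSolvable G] (K L : Subgroup G) [K.Normal]
    [L.Normal] :
    fittingHeight (G ⧸ K ⊓ L) ≤ max (fittingHeight (G ⧸ K)) (fittingHeight (G ⧸ L)) := by
  have hker : K ⊓ L = ((mk' K).prod (mk' L)).ker := by
    rw [MonoidHom.ker_prod, ker_mk', ker_mk']
  have h1 : FittingHeightLe (fittingHeight (G ⧸ K)) (G ⧸ K) := fittingHeightLe_fittingHeight
  have h2 : FittingHeightLe (fittingHeight (G ⧸ L)) (G ⧸ L) := fittingHeightLe_fittingHeight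
  have hprod : FittingHeightLe (max (fittingHeight (G ⧸ K)) (fittingHeight (G ⧸ L)))
      ((G ⧸ K) × (G ⧸ L)) :=
    (h1.mono (le_max_left _ _)).prod (h2.mono (le_max_right _ _))
  exact fittingHeight_le (hprod.of_injective _ ((injective_lift_iff _ _ hker.le).mpr hker))

end FittingHeight

section SG

variable {G : Type} [Group G]

instance SG_normal : (SG G).Normal := by
  rw [SG, sInf_eq_iInf']
  exact Subgroup.normal_iInf_normal fun K => K.2.1

theorem fittingHeight_quotient_SG_lt [Finite G] [Group.IsSolvable G] [Nontrivial G] :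
    fittingHeight (G ⧸ SG G) < fittingHeight G := by
  set S : Set (Subgroup G) := {K | ∃ hK : K.Normal, fittingHeight (G ⧸ K) < fittingHeight G}
  have hS : InfClosed S := by
    rintro K ⟨_, hK⟩ L ⟨_, hL⟩
    exact ⟨inferInstance, (fittingHeight_quotient_inf_le K L).trans_lt (max_lt hK hL)⟩
  have htop : ⊤ ∈ S := by
    have : Subsingleton (G ⧸ (⊤ : Subgroup G)) := subsingleton_quotient_top
    exact ⟨inferInstance, fittingHeight_eq_zero.trans_lt fittingHeight_pos⟩
  obtain ⟨_, hlt⟩ := hS.sInf_mem_of_nonempty S.toFinite ⟨⊤, htop⟩ subset_rfl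
  exact hlt

theorem SG_le_iff [Finite G] [Group.IsSolvable G] [Nontrivial G] (K : Subgroup G) [K.Normal] :
    SG G ≤ K ↔ fittingHeight (G ⧸ K) < fittingHeight G := by
  refine ⟨fun h => ?_, fun h => sInf_le ⟨inferInstance, h⟩⟩
  calc fittingHeight (G ⧸ K) ≤ fittingHeight (G ⧸ SG G) :=
        fittingHeight_le_of_surjective (map _ _ (.id G) h)
          (map_surjective_of_surjective _ _ _ mk_surjective h)
    _ < fittingHeight G := fittingHeight_quotient_SG_lt

theorem SG_ne_bot [Finite G] [Group.IsSolvable G] [Nontrivial G] : SG G ≠ ⊥ := by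
  intro h
  have := (SG_le_iff ⊥).mp h.le
  rw [fittingHeight_congr quotientBot] at this
  exact this.false

end SG

theorem SG_quotient_le_iff_of_fittingHeight_eq {G : Type} [Group G] [Finite G]
    [Group.IsSolvable G] (N : Subgroup G) [N.Normal] [Nontrivial (G ⧸ N)]
    (h : fittingHeight (G ⧸ N) = fittingHeight G) (K : Subgroup (G ⧸ N)) [K.Normal] :
    SG (G ⧸ N) ≤ K ↔ (SG G).map (mk' N) ≤ K := by
  have : Nontrivial G := (mk'_surjective N).nontrivial
  rw [SG_le_iff, Subgroup.map_le_iff_le_comap, SG_le_iff,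
    fittingHeight_quotient_comap _ (mk'_surjective N), h]

theorem statement_3 (G : Type) [Group G] [Finite G] (hsol : IsSolvable G)
    (N : Subgroup G) [N.Normal] [Nontrivial (G ⧸ N)] :
    (((SG G).map (QuotientGroup.mk' N) ≠ ⊥) ↔
      fittingHeight (G ⧸ N) = fittingHeight G) ∧
    ((fittingHeight (G ⧸ N) = fittingHeight G) ↔
      SG (G ⧸ N) = (SG G).map (QuotientGroup.mk' N)) := by
  have : Group.IsSolvable G := hsol
  have : Nontrivial G := (mk'_surjective N).nontrivial
  have hi_ii : (SG G).map (mk' N) ≠ ⊥ ↔ fittingHeight (G ⧸ N) = fittingHeight G := by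
    rw [Ne, Subgroup.map_eq_bot_iff, ker_mk', SG_le_iff, (fittingHeight_quotient_le N).lt_iff_ne,
      not_not]
  refine ⟨hi_ii, fun h => ?_, fun h => hi_ii.mp (h ▸ SG_ne_bot)⟩
  have : ((SG G).map (mk' N)).Normal := SG_normal.map _ (mk'_surjective N)
  exact le_antisymm ((SG_quotient_le_iff_of_fittingHeight_eq N h _).mpr le_rfl)
    ((SG_quotient_le_iff_of_fittingHeight_eq N h _).mp le_rfl)
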